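/- arXiv:1805.07197 — 4 statements merged into one kernel-verified Lean document; each statement's English description precedes it below -/
import Mathlib

section
/- (Tverberg's theorem.) Let d ≥ 1 and r ≥ 2 be integers and set n = (r-1)(d+1)+1. Given any n points p_1, ..., p_n in ℝ^d, there is a partition of {1,...,n} into r parts A_1, ..., A_r such that the convex hulls conv{p_i : i ∈ A_m}, m = 1,...,r, have a point in common. -/
/-!
Sarkaria's proof via Bárány's colorful Carathéodory theorem. Lift each point to
`q i = (p i, 1) ∈ ℝ^(d+1)` and attach to every point `i` and part `m` the tensor
`(e m - 𝟙 / r) ⊗ q i`. These tensors lie in the space of tensors with vanishing sum over `m`,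
of dimension `(r-1)(d+1)`, one less than the number of points, and for fixed `i` they average to
`0`. Colorful Carathéodory therefore
picks a part `c i` for every point and convex weights `w` with
`∑ i, w i • (e (c i) - 𝟙 / r) ⊗ q i = 0`. Read coordinatewise, this says that every class
`{i | c i = m}` carries exactly `1 / r` of `∑ i, w i • q i`. By the last coordinate each class has
weight `1 / r`, so the weighted mean `∑ i, w i • p i` lies in every `conv {p i | c i = m}`.

For colorful Carathéodory, take a colorful choice whose hull `K` is closest to `0`, with nearest
point `z ≠ 0`. Then `K` lies in the half-space `⟪z, ·⟫ ≥ ‖z‖²`, so `z` is a positive combination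
of affinely independent chosen points on the hyperplane `⟪z, ·⟫ = ‖z‖²`. As the hyperplane misses
the origin, these points are linearly independent, hence fewer than the colors. Replacing the
point of an unused color `j` by a point `y` of color `j` with `⟪z, y⟫ ≤ 0` brings the hull closer
to `0`.
-/

/-- `A 1, ..., A r` is a partition of the index set. -/
def IsPartitionOf {n r : ℕ} (A : Fin r → Finset (Fin n)) : Prop :=
  (∀ m m', m ≠ m' → Disjoint (A m) (A m')) ∧ ∀ i, ∃ m, i ∈ A m

open Module RealInnerProductSpace Set Submodule

universe u

theorem AffineIndependent.linearIndependent_of_forall_apply_eq {k V ι : Type*} [Field k]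
    [AddCommGroup V] [Module k V] {v : ι → V} (hv : AffineIndependent k v) (f : V →ₗ[k] k)
    {c : k} (hc : c ≠ 0) (hf : ∀ i, f (v i) = c) : LinearIndependent k v := by
  rw [linearIndependent_iff']
  intro s g hg
  have hg₀ : ∑ i ∈ s, g i = 0 := by
    have := congrArg f hg
    simp only [map_sum, map_smul, hf, smul_eq_mul, map_zero, ← Finset.sum_mul] at this
    exact (mul_eq_zero.mp this).resolve_right hc
  refine hv s g hg₀ ?_
  rw [Finset.weightedVSub_eq_weightedVSubOfPoint_of_sum_eq_zero _ _ _ hg₀ 0,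
    Finset.weightedVSubOfPoint_apply]
  simpa using hg

theorem exists_weights_of_mem_convexHull_range {ι E : Type*} [Fintype ι] [AddCommGroup E]
    [Module ℝ E] {v : ι → E} {x : E} (hx : x ∈ convexHull ℝ (range v)) :
    ∃ w : ι → ℝ, (∀ i, 0 ≤ w i) ∧ ∑ i, w i = 1 ∧ ∑ i, w i • v i = x := by
  classical
  have hv : v = Fintype.linearCombination ℝ v ∘ fun i j => if i = j then (1 : ℝ) else 0 := by
    ext i; simp [Fintype.linearCombination_apply]
  rw [hv, range_comp, ← LinearMap.image_convexHull, convexHull_basis_eq_stdSimplex] at hx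
  obtain ⟨w, ⟨hw₀, hw₁⟩, rfl⟩ := hx
  exact ⟨w, hw₀, hw₁, by simp [Fintype.linearCombination_apply]⟩

theorem Fintype.exists_range_subset_image_compl {ι κ α : Type*} [Fintype ι] [Fintype κ]
    {x : ι → α} {v : κ → α} (h : range v ⊆ range x) (hcard : card κ < card ι) :
    ∃ j, range v ⊆ x '' {j}ᶜ := by
  choose g hg using fun a => h (mem_range_self a)
  obtain ⟨j, hj⟩ : ∃ j, j ∉ range g := by
    by_contra! hsurj
    exact hcard.not_ge (card_le_of_surjective g hsurj)
  refine ⟨j, ?_⟩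
  rintro _ ⟨a, rfl⟩
  exact ⟨g a, fun hga => hj ⟨a, hga⟩, hg a⟩

section InnerProductSpace

variable {E : Type u} [NormedAddCommGroup E] [InnerProductSpace ℝ E]

theorem Convex.exists_norm_lt_of_inner_lt {K : Set E} (hK : Convex ℝ K) {z y : E} (hz : z ∈ K)
    (hy : y ∈ K) (h : ⟪z, y⟫ < ‖z‖ ^ 2) : ∃ w ∈ K, ‖w‖ < ‖z‖ := by
  by_contra! hmin
  have : Nonempty K := ⟨⟨z, hz⟩⟩
  have hinf : ‖0 - z‖ = ⨅ w : K, ‖0 - (w : E)‖ := by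
    refine le_antisymm (le_ciInf fun w => by simpa using hmin w w.2) ?_
    exact ciInf_le (f := fun w : K => ‖0 - (w : E)‖)
      ⟨0, forall_mem_range.2 fun _ => norm_nonneg _⟩ ⟨z, hz⟩
  have := (norm_eq_iInf_iff_real_inner_le_zero hK hz).mp hinf y hy
  rw [zero_sub, inner_neg_left, inner_sub_right, real_inner_self_eq_norm_sq] at this
  linarith

theorem exists_inner_nonpos_of_zero_mem_convexHull {s : Set E} (hs : (0 : E) ∈ convexHull ℝ s)
    (z : E) : ∃ y ∈ s, ⟪z, y⟫ ≤ 0 := by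
  by_contra! hpos
  have hlin : IsLinearMap ℝ fun y : E => ⟪z, y⟫ := (innerₗ E z).isLinear
  have h0 : (0 : ℝ) < ⟪z, 0⟫ := convexHull_min hpos (convex_halfSpace_gt hlin 0) hs
  simp at h0

theorem exists_linearIndependent_of_mem_convexHull_of_inner_le {s : Set E} {z : E}
    (hz : z ∈ convexHull ℝ s) (hz₀ : z ≠ 0) (hs : ∀ y ∈ s, ‖z‖ ^ 2 ≤ ⟪z, y⟫) :
    ∃ (κ : Type u) (_ : Fintype κ) (v : κ → E),
      range v ⊆ s ∧ LinearIndependent ℝ v ∧ z ∈ convexHull ℝ (range v) := by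
  obtain ⟨κ, _, v, w, hvs, hv, hw₀, hw₁, hwz⟩ := eq_pos_convex_span_of_mem_convexHull hz
  have hterm : ∀ a ∈ Finset.univ, 0 ≤ w a * (⟪z, v a⟫ - ‖z‖ ^ 2) := fun a _ =>
    mul_nonneg (hw₀ a).le (sub_nonneg.2 (hs _ (hvs (mem_range_self a))))
  have hsum : ∑ a, w a * (⟪z, v a⟫ - ‖z‖ ^ 2) = 0 := by
    simp only [mul_sub, Finset.sum_sub_distrib, ← Finset.sum_mul, hw₁, one_mul,
      ← real_inner_smul_right, ← inner_sum, hwz, real_inner_self_eq_norm_sq, sub_self]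
  have hplane (a : κ) : innerₗ E z (v a) = ‖z‖ ^ 2 := by
    have := (Finset.sum_eq_zero_iff_of_nonneg hterm).1 hsum a (Finset.mem_univ a)
    rw [innerₗ_apply_apply]
    linarith [(mul_eq_zero.1 this).resolve_left (hw₀ a).ne']
  refine ⟨κ, ‹_›, v, hvs, hv.linearIndependent_of_forall_apply_eq _ (by positivity) hplane, ?_⟩
  exact mem_convexHull_of_exists_fintype w v (fun a => (hw₀ a).le) hw₁ mem_range_self hwz

theorem exists_mem_convexHull_image_compl_of_inner_le {ι : Type*} [Fintype ι] {x : ι → E}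
    {z : E} (hz : z ∈ convexHull ℝ (range x)) (hz₀ : z ≠ 0) (hx : ∀ i, ‖z‖ ^ 2 ≤ ⟪z, x i⟫)
    (hdim : finrank ℝ (span ℝ (range x)) < Fintype.card ι) :
    ∃ j, z ∈ convexHull ℝ (x '' {j}ᶜ) := by
  obtain ⟨κ, _, v, hvx, hv, hzv⟩ :=
    exists_linearIndependent_of_mem_convexHull_of_inner_le hz hz₀ (forall_mem_range.2 hx)
  have hcard : Fintype.card κ < Fintype.card ι := calc
    Fintype.card κ = finrank ℝ (span ℝ (range v)) := (finrank_span_eq_card hv).symm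
    _ ≤ finrank ℝ (span ℝ (range x)) := by
      have := FiniteDimensional.span_of_finite ℝ (finite_range x)
      exact Submodule.finrank_mono (span_mono hvx)
    _ < Fintype.card ι := hdim
  obtain ⟨j, hj⟩ := Fintype.exists_range_subset_image_compl hvx hcard
  exact ⟨j, convexHull_mono hj hzv⟩

theorem exists_colorful_zero_mem_convexHull {ι : Type*} [Fintype ι] (C : ι → Finset E)
    (hdim : finrank ℝ (span ℝ (⋃ i, (C i : Set E))) < Fintype.card ι)
    (hC : ∀ i, (0 : E) ∈ convexHull ℝ (C i : Set E)) :
    ∃ x : ι → E, (∀ i, x i ∈ C i) ∧ (0 : E) ∈ convexHull ℝ (range x) := by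
  classical
  have : Nonempty ι := Fintype.card_pos_iff.1 (by omega)
  have (i : ι) : Nonempty (C i) := (convexHull_nonempty_iff.1 ⟨0, hC i⟩).to_subtype
  let K (x : ∀ i, C i) : Set E := convexHull ℝ (range fun i => (x i : E))
  obtain ⟨x, hx⟩ := Finite.exists_min fun x => Metric.infDist 0 (K x)
  refine ⟨fun i => x i, fun i => (x i).2, ?_⟩
  by_contra h₀
  obtain ⟨z, hzK, hz⟩ : ∃ z ∈ K x, Metric.infDist 0 (K x) = dist 0 z :=
    ((finite_range _).isCompact_convexHull ℝ).exists_infDist_eq_dist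
      (range_nonempty _).convexHull 0
  rw [dist_zero_left] at hz
  have hz₀ : z ≠ 0 := ne_of_mem_of_not_mem hzK h₀
  have hface (i : ι) : ‖z‖ ^ 2 ≤ ⟪z, x i⟫ := not_lt.1 fun hlt => by
    obtain ⟨u, hu, hlt⟩ := (convex_convexHull ℝ _).exists_norm_lt_of_inner_lt hzK
      (subset_convexHull ℝ _ (mem_range_self i)) hlt
    have := Metric.infDist_le_dist_of_mem (x := 0) hu
    rw [dist_zero_left, hz] at this
    exact this.not_gt hlt
  have hspan : finrank ℝ (span ℝ (range fun i => (x i : E))) < Fintype.card ι := by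
    have := FiniteDimensional.span_of_finite ℝ (finite_iUnion fun i => (C i).finite_toSet)
    refine lt_of_le_of_lt (Submodule.finrank_mono (span_mono ?_)) hdim
    rintro _ ⟨i, rfl⟩
    exact mem_iUnion_of_mem i (x i).2
  obtain ⟨j, hj⟩ := exists_mem_convexHull_image_compl_of_inner_le hzK hz₀ hface hspan
  obtain ⟨y, hyC, hyz⟩ := exists_inner_nonpos_of_zero_mem_convexHull (hC j) z
  let x' := Function.update x j ⟨y, hyC⟩
  have hzK' : z ∈ K x' := by
    refine convexHull_mono ?_ hj
    rintro _ ⟨i, hi, rfl⟩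
    exact ⟨i, by simp [x', Function.update_of_ne hi]⟩
  have hyK' : y ∈ K x' := subset_convexHull ℝ _ ⟨j, by simp [x']⟩
  obtain ⟨w, hw, hwz⟩ := (convex_convexHull ℝ _).exists_norm_lt_of_inner_lt hzK' hyK'
    (hyz.trans_lt (by positivity))
  have := Metric.infDist_le_dist_of_mem (x := 0) hw
  rw [dist_zero_left] at this
  linarith [hx x']

end InnerProductSpace

section Sarkaria

variable {μ κ : Type*} [Fintype μ]

def sumFst : EuclideanSpace ℝ (μ × κ) →ₗ[ℝ] κ → ℝ where
  toFun w k := ∑ m, w (m, k)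
  map_add' _ _ := by ext; simp [Finset.sum_add_distrib]
  map_smul' _ _ := by ext; simp [Finset.mul_sum]

variable [DecidableEq μ]

noncomputable def sarkariaLift (m : μ) (y : κ → ℝ) : EuclideanSpace ℝ (μ × κ) :=
  WithLp.toLp 2 fun a => ((if a.1 = m then 1 else 0) - (Fintype.card μ : ℝ)⁻¹) * y a.2

variable (μ κ) in
theorem finrank_ker_sumFst [Nonempty μ] [Fintype κ] :
    finrank ℝ (LinearMap.ker (sumFst (μ := μ) (κ := κ))) =
      (Fintype.card μ - 1) * Fintype.card κ := by
  obtain ⟨m₀⟩ := ‹Nonempty μ›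
  have hsurj : Function.Surjective (sumFst (μ := μ) (κ := κ)) := fun y =>
    ⟨WithLp.toLp 2 fun a => if a.1 = m₀ then y a.2 else 0, by ext k; simp [sumFst]⟩
  have := (sumFst (μ := μ) (κ := κ)).finrank_range_add_finrank_ker
  rw [LinearMap.range_eq_top.2 hsurj, finrank_top, finrank_euclideanSpace, Fintype.card_prod,
    finrank_fintype_fun_eq_card] at this
  rw [Nat.sub_one_mul]
  omega

theorem sarkariaLift_mem_ker_sumFst (m : μ) (y : κ → ℝ) :
    sarkariaLift m y ∈ LinearMap.ker sumFst := by
  have : Nonempty μ := ⟨m⟩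
  ext k
  simp [sumFst, sarkariaLift, ← Finset.sum_mul]

theorem sum_sarkariaLift (y : κ → ℝ) : ∑ m : μ, sarkariaLift m y = 0 := by
  ext a
  have : Nonempty μ := ⟨a.1⟩
  simp [sarkariaLift, ← Finset.sum_mul]

theorem zero_mem_convexHull_range_sarkariaLift [Nonempty μ] (y : κ → ℝ) :
    (0 : EuclideanSpace ℝ (μ × κ)) ∈ convexHull ℝ (range fun m : μ => sarkariaLift m y) := by
  refine mem_convexHull_of_exists_fintype (fun _ => (Fintype.card μ : ℝ)⁻¹) _
    (fun _ => by positivity) ?_ mem_range_self ?_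
  · simp
  · rw [← Finset.smul_sum, sum_sarkariaLift, smul_zero]

theorem sum_fiber_eq_of_sum_smul_sarkariaLift_eq_zero {ι : Type*} [Fintype ι] (c : ι → μ)
    (w : ι → ℝ) (y : ι → κ → ℝ) (h : ∑ i, w i • sarkariaLift (c i) (y i) = 0) (m : μ) :
    ∑ i with c i = m, w i • y i = (Fintype.card μ : ℝ)⁻¹ • ∑ i, w i • y i := by
  ext k
  have hk := congrArg (· (m, k)) h
  simp only [sarkariaLift, WithLp.ofLp_sum, WithLp.ofLp_smul, Finset.sum_apply, Pi.smul_apply,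
    smul_eq_mul, PiLp.zero_apply, Finset.sum_filter] at hk ⊢
  rw [← sub_eq_zero]
  convert hk using 1
  rw [Finset.mul_sum, ← Finset.sum_sub_distrib]
  refine Finset.sum_congr rfl fun i _ => ?_
  by_cases hi : c i = m <;> simp [hi, Ne.symm] <;> ring

theorem exists_balanced_coloring {ι : Type*} [Fintype ι] [Nonempty μ] [Fintype κ]
    (y : ι → κ → ℝ) (hcard : (Fintype.card μ - 1) * Fintype.card κ < Fintype.card ι) :
    ∃ (c : ι → μ) (w : ι → ℝ), (∀ i, 0 ≤ w i) ∧ ∑ i, w i = 1 ∧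
      ∀ m, ∑ i with c i = m, w i • y i = (Fintype.card μ : ℝ)⁻¹ • ∑ i, w i • y i := by
  classical
  let C (i : ι) : Finset (EuclideanSpace ℝ (μ × κ)) :=
    Finset.univ.image fun m => sarkariaLift m (y i)
  have hdim :
      finrank ℝ (span ℝ (⋃ i, (C i : Set (EuclideanSpace ℝ (μ × κ))))) < Fintype.card ι := by
    refine lt_of_le_of_lt ?_ hcard
    rw [← finrank_ker_sumFst μ κ]
    refine Submodule.finrank_mono (span_le.2 ?_)
    simp only [C, iUnion_subset_iff, Finset.coe_image, Finset.coe_univ, image_univ]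
    rintro i _ ⟨m, rfl⟩
    exact sarkariaLift_mem_ker_sumFst m (y i)
  obtain ⟨x, hxC, hx₀⟩ := exists_colorful_zero_mem_convexHull C hdim fun i => by
    simpa [C] using zero_mem_convexHull_range_sarkariaLift (μ := μ) (y i)
  choose c hc using fun i => Finset.mem_image.1 (hxC i)
  obtain ⟨w, hw₀, hw₁, hw⟩ := exists_weights_of_mem_convexHull_range hx₀
  refine ⟨c, w, hw₀, hw₁, sum_fiber_eq_of_sum_smul_sarkariaLift_eq_zero c w y ?_⟩
  simpa only [hc] using hw

end Sarkaria

theorem mem_convexHull_image_of_sum_smul_eq {ι F : Type*} [AddCommGroup F] [Module ℝ F]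
    {t : Finset ι} {w : ι → ℝ} (hw₀ : ∀ i ∈ t, 0 ≤ w i) {a : ℝ} (ha : 0 < a) (p : ι → F) {z : F}
    (hw : ∑ i ∈ t, w i = a) (hz : ∑ i ∈ t, w i • p i = a • z) : z ∈ convexHull ℝ (p '' t) := by
  have := t.centerMass_mem_convexHull hw₀ (hw ▸ ha) fun i hi => mem_image_of_mem p hi
  rwa [Finset.centerMass, hw, hz, inv_smul_smul₀ ha.ne'] at this

theorem isPartitionOf_fiber {n r : ℕ} (c : Fin n → Fin r) :
    IsPartitionOf fun m => {i | c i = m} :=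
  ⟨fun m m' hm => Finset.disjoint_filter.2 fun _ _ h h' => hm (h ▸ h'),
    fun i => ⟨c i, by simp⟩⟩

theorem tverberg_general (d r : ℕ) (hr : 2 ≤ r)
    (p : Fin ((r - 1) * (d + 1) + 1) → Fin d → ℝ) :
    ∃ A : Fin r → Finset (Fin ((r - 1) * (d + 1) + 1)), IsPartitionOf A ∧
      ∃ z : Fin d → ℝ, ∀ m, z ∈ convexHull ℝ (p '' ↑(A m)) := by
  have : Nonempty (Fin r) := ⟨⟨0, by omega⟩⟩
  -- `q i = (p i, 1)`, with coordinates indexed by `Fin d ⊕ Unit`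
  obtain ⟨c, w, hw₀, hw₁, hc⟩ :=
    exists_balanced_coloring (μ := Fin r) (fun i => Sum.elim (p i) (1 : Unit → ℝ)) (by simp)
  refine ⟨fun m => {i | c i = m}, isPartitionOf_fiber c, ∑ i, w i • p i, fun m => ?_⟩
  refine mem_convexHull_image_of_sum_smul_eq (fun i _ => hw₀ i) (a := (r : ℝ)⁻¹)
    (by positivity) p ?_ ?_
  · simpa [hw₁] using congrFun (hc m) (Sum.inr ())
  · ext k
    simpa using congrFun (hc m) (Sum.inl k)

/-- Tverberg's theorem: for `d ≥ 1`, `r ≥ 2` and `n = (r-1)(d+1)+1`, any `n` points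
in `ℝ^d` can be partitioned into `r` parts whose convex hulls have a common point. -/
theorem tverberg (d r : ℕ) (hd : 1 ≤ d) (hr : 2 ≤ r)
    (p : Fin ((r - 1) * (d + 1) + 1) → Fin d → ℝ) :
    ∃ A : Fin r → Finset (Fin ((r - 1) * (d + 1) + 1)), IsPartitionOf A ∧
      ∃ z : Fin d → ℝ, ∀ m, z ∈ convexHull ℝ (p '' ↑(A m)) :=
  tverberg_general d r hr p
end

section
/- If an ordered q-increasing (d+1)-dimensional sequence a of length n ≥ 5 is left-dominant, then for each pair of distinct s,t ∈ {1,...,d} it is not the case that f_a(t,i,j)/f_a(s,j,k) ∈ [1/q, q] for all 1 ≤ i < j < k ≤ n; that is, either f_a(t,i,j)/f_a(s,j,k) > q for all such triples, or f_a(t,i,j)/f_a(s,j,k) < 1/q for all such triples. -/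
/-- A `(d+1)`-dimensional sequence is ordered `q`-increasing: every coordinate
sequence is positive and for every `t` the sequence of ratios of the `(t+1)`-st
to the `t`-th coordinate sequence is `q`-increasing. -/
def OrdQInc (q : ℝ) {d n : ℕ} (a : Fin n → Fin (d + 1) → ℝ) : Prop :=
  (∀ i t, 0 < a i t) ∧
  ∀ t : Fin d, ∀ i : Fin n, ∀ h : (i : ℕ) + 1 < n,
    a ⟨(i : ℕ) + 1, h⟩ t.succ / a ⟨(i : ℕ) + 1, h⟩ t.castSucc >
      q * (a i t.succ / a i t.castSucc)

/-- `fseq a t i j` is the increase `f_a(t,i,j)` of the ratio of the `(t+1)`-st and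
`t`-th coordinate sequences from position `i` to position `j`. -/
noncomputable def fseq {d n : ℕ} (a : Fin n → Fin (d + 1) → ℝ) (t : Fin d) (i j : Fin n) : ℝ :=
  (a j t.succ * a i t.castSucc) / (a j t.castSucc * a i t.succ)

/-- `a` is left-dominant: for each pair of distinct `s,t`, the position of
`f_a(t,i,j)/f_a(s,j,k)` relative to the interval `[1/q, q]` is the same for all
triples `i < j < k`. -/
def LeftDominant (q : ℝ) {d n : ℕ} (a : Fin n → Fin (d + 1) → ℝ) : Prop :=
  ∀ s t : Fin d, s ≠ t →
    (∀ i j k : Fin n, i < j → j < k → fseq a t i j / fseq a s j k < 1 / q) ∨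
    (∀ i j k : Fin n, i < j → j < k → fseq a t i j / fseq a s j k ∈ Set.Icc (1 / q) q) ∨
    (∀ i j k : Fin n, i < j → j < k → q < fseq a t i j / fseq a s j k)

/-- `a` is right-dominant: for each pair of distinct `s,t`, the position of
`f_a(t,j,k)/f_a(s,i,j)` relative to the interval `[1/q, q]` is the same for all
triples `i < j < k`. -/
def RightDominant (q : ℝ) {d n : ℕ} (a : Fin n → Fin (d + 1) → ℝ) : Prop :=
  ∀ s t : Fin d, s ≠ t →
    (∀ i j k : Fin n, i < j → j < k → fseq a t j k / fseq a s i j < 1 / q) ∨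
    (∀ i j k : Fin n, i < j → j < k → fseq a t j k / fseq a s i j ∈ Set.Icc (1 / q) q) ∨
    (∀ i j k : Fin n, i < j → j < k → q < fseq a t j k / fseq a s i j)

noncomputable def coordRatio {d n : ℕ} (a : Fin n → Fin (d + 1) → ℝ) (t : Fin d) (i : Fin n) :
    ℝ :=
  a i t.succ / a i t.castSucc

section

variable {q : ℝ} {d n : ℕ} {a : Fin n → Fin (d + 1) → ℝ}

theorem fseq_eq_coordRatio_div (t : Fin d) (i j : Fin n) :
    fseq a t i j = coordRatio a t j / coordRatio a t i :=
  (div_div_div_eq _ _ _ _).symm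

theorem OrdQInc.coordRatio_pos (ha : OrdQInc q a) (t : Fin d) (i : Fin n) :
    0 < coordRatio a t i :=
  div_pos (ha.1 i _) (ha.1 i _)

theorem OrdQInc.fseq_pos (ha : OrdQInc q a) (t : Fin d) (i j : Fin n) : 0 < fseq a t i j := by
  rw [fseq_eq_coordRatio_div]
  exact div_pos (ha.coordRatio_pos t j) (ha.coordRatio_pos t i)

theorem OrdQInc.fseq_mul_fseq (ha : OrdQInc q a) (t : Fin d) (i j k : Fin n) :
    fseq a t i j * fseq a t j k = fseq a t i k := by
  simp only [fseq_eq_coordRatio_div]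
  exact div_mul_div_cancel₀' (ha.coordRatio_pos t j).ne' _ _

theorem OrdQInc.lt_fseq_of_val_eq_succ (ha : OrdQInc q a) (t : Fin d) {i j : Fin n}
    (hij : (j : ℕ) = i + 1) : q < fseq a t i j := by
  have hj : j = ⟨i + 1, hij ▸ j.isLt⟩ := Fin.ext hij
  rw [fseq_eq_coordRatio_div, lt_div_iff₀ (ha.coordRatio_pos t i), hj]
  exact ha.2 t i _

theorem OrdQInc.pow_lt_fseq (ha : OrdQInc q a) (hq : 0 < q) (t : Fin d) (m : ℕ) {i j : Fin n}
    (hij : (j : ℕ) = i + (m + 1)) : q ^ (m + 1) < fseq a t i j := by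
  induction m generalizing j with
  | zero => simpa using ha.lt_fseq_of_val_eq_succ t hij
  | succ m ih =>
    set j' : Fin n := ⟨i + (m + 1), by omega⟩
    calc q ^ (m + 1 + 1) = q ^ (m + 1) * q := pow_succ q (m + 1)
      _ < fseq a t i j' * fseq a t j' j :=
        mul_lt_mul'' (ih rfl) (ha.lt_fseq_of_val_eq_succ t (by simp [j', hij]; omega))
          (by positivity) hq.le
      _ = fseq a t i j := ha.fseq_mul_fseq t i j' j

theorem le_sq_of_div_le_of_one_div_le {x y z q : ℝ} (hx : 0 < x) (hy : 0 < y) (hz : 0 < z)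
    (hupper : x / y ≤ q) (hlower : 1 / q ≤ x / (y * z)) : z ≤ q ^ 2 := by
  have hq : 0 < q := (div_pos hx hy).trans_le hupper
  rw [div_le_iff₀ hy] at hupper
  rw [div_le_div_iff₀ hq (mul_pos hy hz)] at hlower
  nlinarith

/-- Five positions suffice: the bounds at `(0,1,2)` and `(0,1,4)` force `f_a(s,2,4) ≤ q ^ 2`,
while `q`-increase gives `f_a(s,2,4) > q ^ 2`. -/
theorem OrdQInc.not_forall_fseq_div_mem_Icc (ha : OrdQInc q a) (hn : 5 ≤ n) (s t : Fin d) :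
    ¬ ∀ i j k : Fin n, i < j → j < k → fseq a t i j / fseq a s j k ∈ Set.Icc (1 / q) q := by
  intro h
  let p : Fin 5 → Fin n := Fin.castLE hn
  have hp : StrictMono p := Fin.strictMono_castLE hn
  have hupper := (h (p 0) (p 1) (p 2) (hp (by decide)) (hp (by decide))).2
  have hlower := (h (p 0) (p 1) (p 4) (hp (by decide)) (hp (by decide))).1
  rw [← ha.fseq_mul_fseq s (p 1) (p 2) (p 4)] at hlower
  have hfs := le_sq_of_div_le_of_one_div_le (ha.fseq_pos t _ _) (ha.fseq_pos s _ _)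
    (ha.fseq_pos s _ _) hupper hlower
  have hq : 0 < q := (div_pos (ha.fseq_pos t _ _) (ha.fseq_pos s _ _)).trans_le hupper
  exact (ha.pow_lt_fseq hq s 1 (i := p 2) (j := p 4) rfl).not_ge hfs

end

theorem left_dominant_dichotomy_general (q : ℝ) (d n : ℕ) (hn : 5 ≤ n)
    (a : Fin n → Fin (d + 1) → ℝ) (ha : OrdQInc q a) (hl : LeftDominant q a)
    (s t : Fin d) (hst : s ≠ t) :
    (∀ i j k : Fin n, i < j → j < k → q < fseq a t i j / fseq a s j k) ∨
    (∀ i j k : Fin n, i < j → j < k → fseq a t i j / fseq a s j k < 1 / q) := by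
  rcases hl s t hst with hbelow | hinside | habove
  · exact Or.inr hbelow
  · exact absurd hinside (ha.not_forall_fseq_div_mem_Icc hn s t)
  · exact Or.inl habove

/-- For a left-dominant ordered `q`-increasing sequence of length `n ≥ 5`, for each
pair of distinct `s,t` the quotient `f_a(t,i,j)/f_a(s,j,k)` cannot lie in `[1/q,q]`
for all triples: either it exceeds `q` for all `i < j < k` or it is below `1/q`
for all `i < j < k`. -/
theorem left_dominant_dichotomy (q : ℝ) (hq : 1 < q) (d n : ℕ) (hn : 5 ≤ n)
    (a : Fin n → Fin (d + 1) → ℝ) (ha : OrdQInc q a) (hl : LeftDominant q a)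
    (s t : Fin d) (hst : s ≠ t) :
    (∀ i j k : Fin n, i < j → j < k → q < fseq a t i j / fseq a s j k) ∨
    (∀ i j k : Fin n, i < j → j < k → fseq a t i j / fseq a s j k < 1 / q) :=
  left_dominant_dichotomy_general q d n hn a ha hl s t hst
end

section
/- Let q > 1, d > 1, and let a be a q-pseudo-geometric d-dimensional sequence of length n ≥ 2. For distinct s,t ∈ {1,...,d} say that t grows faster than s if the sequence (a_i^(t)/a_i^(s))_i is q-increasing. Then 'grows faster' is a strict total order on {1,...,d}: for distinct s,t exactly one of 't grows faster than s', 's grows faster than t' holds, and the relation is transitive. Consequently there is a unique permutation π of {1,...,d} such that the reordered sequence with coordinate sequences a^(π(1)), ..., a^(π(d)) is ordered q-increasing, i.e., for every 1 ≤ t < d the sequence (a_i^(π(t+1))/a_i^(π(t)))_i is q-increasing. -/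
/-- A finite sequence of reals is `q`-increasing: all terms are positive and
each term is more than `q` times the previous one. -/
def QIncr (q : ℝ) {n : ℕ} (b : Fin n → ℝ) : Prop :=
  (∀ i, 0 < b i) ∧ ∀ i : Fin n, ∀ h : (i : ℕ) + 1 < n, b ⟨(i : ℕ) + 1, h⟩ > q * b i

/-- A `d`-dimensional sequence is `q`-pseudo-geometric: every coordinate sequence
is positive and for all distinct coordinates `s ≠ t` one of the two ratio sequences
is `q`-increasing. -/
def PseudoGeom (q : ℝ) {d n : ℕ} (a : Fin n → Fin d → ℝ) : Prop :=
  (∀ i t, 0 < a i t) ∧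
  ∀ s t : Fin d, s ≠ t →
    QIncr q (fun i => a i t / a i s) ∨ QIncr q (fun i => a i s / a i t)

/-- A `d`-dimensional sequence is in general position: any `d` of its terms are
linearly independent. -/
def GenPos {d n : ℕ} (a : Fin n → Fin d → ℝ) : Prop :=
  ∀ g : Fin d → Fin n, Function.Injective g →
    LinearIndependent ℝ (fun k : Fin d => a (g k))

/-!
The product of a `p`-increasing and an `r`-increasing sequence is `pr`-increasing, hence
`q`-increasing when `q ≥ 1`. This makes "grows faster" transitive, since the ratio sequences
multiply, and asymmetric, since the product of the ratios in both directions is the constant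
sequence `1`, which is not `q`-increasing once it has two terms. Being total by assumption, it is
a strict total order on the coordinates, and a permutation with `q`-increasing consecutive ratios
is exactly an order isomorphism from `Fin d` onto the coordinates ordered this way, which exists
and is unique.
-/

namespace QIncr

variable {n : ℕ} {p q r : ℝ} {b c : Fin n → ℝ}

theorem mono (hpq : p ≤ q) (hb : QIncr q b) : QIncr p b :=
  ⟨hb.1, fun i h => (hb.2 i h).trans_le' (mul_le_mul_of_nonneg_right hpq (hb.1 i).le)⟩

theorem mul (hp : 0 ≤ p) (hr : 0 ≤ r) (hb : QIncr p b) (hc : QIncr r c) :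
    QIncr (p * r) (b * c) := by
  refine ⟨fun i => mul_pos (hb.1 i) (hc.1 i), fun i h => ?_⟩
  calc p * r * (b * c) i = p * b i * (r * c i) := by simp only [Pi.mul_apply]; ring
    _ < _ := mul_lt_mul'' (hb.2 i h) (hc.2 i h) (mul_nonneg hp (hb.1 i).le)
        (mul_nonneg hr (hc.1 i).le)

theorem mul_of_one_le (hq : 1 ≤ q) (hb : QIncr q b) (hc : QIncr q c) : QIncr q (b * c) :=
  (hb.mul (by linarith) (by linarith) hc).mono (le_mul_of_one_le_left (by linarith) hq)

theorem not_const (hq : 1 ≤ q) (hn : 2 ≤ n) (x : ℝ) : ¬QIncr q (fun _ : Fin n => x) := by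
  rintro ⟨hpos, hstep⟩
  have hx := hpos ⟨0, by omega⟩
  have := hstep ⟨0, by omega⟩ (by simp only; omega)
  nlinarith

theorem not_of_mul_eq_one (hq : 1 ≤ q) (hn : 2 ≤ n) (hb : QIncr q b) (hc : QIncr q c)
    (hbc : b * c = 1) : False := by
  have := hb.mul_of_one_le hq hc
  rw [hbc] at this
  exact not_const hq hn 1 this

end QIncr

open scoped Relator in
theorem Fin.liftFun_lt_iff_forall_succ {α : Type*} (r : α → α → Prop) [IsTrans α r] {d : ℕ}
    (f : Fin d → α) :
    ((· < ·) ⇒ r) f f ↔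
      ∀ (t : ℕ) (h : t + 1 < d), r (f ⟨t, Nat.lt_of_succ_lt h⟩) (f ⟨t + 1, h⟩) := by
  cases d with
  | zero => exact ⟨fun _ t h => by omega, fun _ i => i.elim0⟩
  | succ m =>
    rw [Fin.liftFun_iff_succ]
    exact ⟨fun H t h => H ⟨t, by omega⟩, fun H i => H i (by omega)⟩

theorem existsUnique_equiv_fin_strictMono {α : Type*} [LinearOrder α] [Fintype α] {d : ℕ}
    (hd : Fintype.card α = d) : ∃! e : Fin d ≃ α, StrictMono e := by
  let e₀ := Fintype.orderIsoFinOfCardEq α hd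
  refine ⟨e₀.toEquiv, e₀.strictMono, fun e he => ?_⟩
  have : he.orderIsoOfSurjective e e.surjective = e₀ := Subsingleton.elim _ _
  exact Equiv.ext fun i => congrArg (· i) this

theorem existsUnique_equiv_fin_chain {α : Type*} [Fintype α] (r : α → α → Prop)
    [IsStrictTotalOrder α r] {d : ℕ} (hd : Fintype.card α = d) :
    ∃! e : Fin d ≃ α, ∀ (t : ℕ) (h : t + 1 < d), r (e ⟨t, Nat.lt_of_succ_lt h⟩) (e ⟨t + 1, h⟩) := by
  classical
  let _ := linearOrderOfSTO r
  simp only [← Fin.liftFun_lt_iff_forall_succ]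
  exact existsUnique_equiv_fin_strictMono hd

/-- Coordinate `t` grows faster than coordinate `s`. -/
def GrowsFaster (q : ℝ) {d n : ℕ} (a : Fin n → Fin d → ℝ) (s t : Fin d) : Prop :=
  QIncr q (fun i => a i t / a i s)

section GrowsFaster

variable {q : ℝ} {d n : ℕ} {a : Fin n → Fin d → ℝ} {s t u : Fin d}

theorem GrowsFaster.trans (hq : 1 ≤ q) (ha : ∀ i, a i s ≠ 0) (hst : GrowsFaster q a s t)
    (hus : GrowsFaster q a u s) : GrowsFaster q a u t := by
  have hprod : (fun i => a i t / a i s) * (fun i => a i s / a i u) = fun i => a i t / a i u :=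
    funext fun i => div_mul_div_cancel₀ (ha i)
  unfold GrowsFaster
  rw [← hprod]
  exact hst.mul_of_one_le hq hus

theorem GrowsFaster.not_growsFaster (hq : 1 ≤ q) (hn : 2 ≤ n) (ha : ∀ i k, a i k ≠ 0)
    (hst : GrowsFaster q a s t) : ¬GrowsFaster q a t s := fun hts =>
  QIncr.not_of_mul_eq_one hq hn hst hts <| funext fun i => by
    rw [Pi.mul_apply, div_mul_div_cancel₀ (ha i s), div_self (ha i t), Pi.one_apply]

theorem PseudoGeom.isStrictTotalOrder_growsFaster (hq : 1 ≤ q) (hn : 2 ≤ n)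
    (ha : PseudoGeom q a) : IsStrictTotalOrder (Fin d) (GrowsFaster q a) where
  trichotomous s t hst hts := by
    by_contra hne
    exact (ha.2 s t hne).elim hst hts
  irrefl s hs := hs.not_growsFaster hq hn (fun i k => (ha.1 i k).ne') hs
  trans s t u hst htu := htu.trans hq (fun i => (ha.1 i t).ne') hst

end GrowsFaster

theorem grows_faster_total_order_general (q : ℝ) (hq : 1 < q) (d n : ℕ)
    (hn : 2 ≤ n) (a : Fin n → Fin d → ℝ) (ha : PseudoGeom q a) :
    (∀ s t : Fin d, s ≠ t →
      Xor' (QIncr q (fun i => a i t / a i s)) (QIncr q (fun i => a i s / a i t))) ∧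
    (∀ s t u : Fin d,
      QIncr q (fun i => a i t / a i s) → QIncr q (fun i => a i s / a i u) →
        QIncr q (fun i => a i t / a i u)) ∧
    (∃! π : Equiv.Perm (Fin d), ∀ (t : ℕ) (h : t + 1 < d),
      QIncr q (fun i => a i (π ⟨t + 1, h⟩) / a i (π ⟨t, Nat.lt_of_succ_lt h⟩))) := by
  have hne : ∀ i k, a i k ≠ 0 := fun i k => (ha.1 i k).ne'
  have asymm {s t : Fin d} (hst : GrowsFaster q a s t) : ¬GrowsFaster q a t s :=
    hst.not_growsFaster hq.le hn hne
  have := ha.isStrictTotalOrder_growsFaster hq.le hn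
  refine ⟨fun s t hst => ?_, fun s t u hst hus => GrowsFaster.trans hq.le (hne · s) hst hus,
    existsUnique_equiv_fin_chain (GrowsFaster q a) (Fintype.card_fin d)⟩
  rcases ha.2 s t hst with h | h
  · exact Or.inl ⟨h, asymm h⟩
  · exact Or.inr ⟨h, asymm h⟩

/-- For a `q`-pseudo-geometric `d`-dimensional sequence of length `n ≥ 2`, the
relation "`t` grows faster than `s`" (meaning `(a_i^{(t)}/a_i^{(s)})_i` is
`q`-increasing) is a strict total order on the coordinates: for distinct `s, t`
exactly one of the two directions holds, and the relation is transitive.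
Consequently there is a unique permutation `π` of the coordinates such that the
reordered sequence is ordered `q`-increasing, i.e. for every `t` with `t+1 < d`
the sequence `(a_i^{(π(t+1))}/a_i^{(π(t))})_i` is `q`-increasing. -/
theorem grows_faster_total_order (q : ℝ) (hq : 1 < q) (d n : ℕ) (hd : 1 < d)
    (hn : 2 ≤ n) (a : Fin n → Fin d → ℝ) (ha : PseudoGeom q a) :
    (∀ s t : Fin d, s ≠ t →
      Xor' (QIncr q (fun i => a i t / a i s)) (QIncr q (fun i => a i s / a i t))) ∧
    (∀ s t u : Fin d,
      QIncr q (fun i => a i t / a i s) → QIncr q (fun i => a i s / a i u) →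
        QIncr q (fun i => a i t / a i u)) ∧
    (∃! π : Equiv.Perm (Fin d), ∀ (t : ℕ) (h : t + 1 < d),
      QIncr q (fun i => a i (π ⟨t + 1, h⟩) / a i (π ⟨t, Nat.lt_of_succ_lt h⟩))) :=
  grows_faster_total_order_general q hq d n hn a ha
end

section
/- Let d ≥ 1, r ≥ 2, n = (r-1)(d+1)+1, and let p_1,...,p_n ∈ ℝ^d be in strong general position. Then: (i) for every proper partition A_1,...,A_r of {1,...,n} (i.e., 1 ≤ |A_m| ≤ d+1 for every m), the intersection ∩_{m=1}^r aff{p_i : i ∈ A_m} consists of exactly one point; (ii) for every partition A_1,...,A_r of {1,...,n} into nonempty parts that is not proper (i.e., some part has more than d+1 elements), the intersection ∩_{m=1}^r aff{p_i : i ∈ A_m} is empty. -/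
/-!
In strong general position any at most `d + 1` of the points are affinely independent: if `p j`
lay in the hull of the other points of such a set `A`, the hulls of `A \ {j}` and `{j}` would
meet although their codimensions add up to at least `d + 1`. Hence a class of size `c ≤ d + 1`
has a hull of codimension exactly `d + 1 - c`, and any class has codimension at least
`d + 1 - c`. As the class sizes add up to `(r - 1)(d + 1) + 1`, the codimensions of a proper
partition add up to exactly `d`, so the hulls meet in a single point; if one class has more than
`d + 1` elements, the deficiencies `d + 1 - c` of the other classes already add up to at least
`d + 1`, so the hulls do not meet.
-/

/-- Points `p 1, ..., p n` in `ℝ^d` are in strong general position if for every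
collection of pairwise disjoint nonempty subsets `A 1, ..., A r` of the index set,
with `H m` the affine hull of `{p i : i ∈ A m}`, the intersection `⋂ m, H m` is
empty whenever the sum of the codimensions is at least `d+1`, and otherwise the
codimensions add up: `dim (⋂ m, H m) = d - Σ m, (d - dim (H m))`. -/
def StrongGenPos {d n : ℕ} (p : Fin n → Fin d → ℝ) : Prop :=
  ∀ (r : ℕ) (A : Fin r → Finset (Fin n)),
    (∀ m, (A m).Nonempty) →
    (∀ m m', m ≠ m' → Disjoint (A m) (A m')) →
    (if d + 1 ≤ ∑ m, (d - Module.finrank ℝ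
          (affineSpan ℝ (p '' ↑(A m)) : AffineSubspace ℝ (Fin d → ℝ)).direction) then
        (⨅ m, affineSpan ℝ (p '' ↑(A m)) : AffineSubspace ℝ (Fin d → ℝ)) = ⊥
      else
        (⨅ m, affineSpan ℝ (p '' ↑(A m)) : AffineSubspace ℝ (Fin d → ℝ)) ≠ ⊥ ∧
        Module.finrank ℝ
            (⨅ m, affineSpan ℝ (p '' ↑(A m)) : AffineSubspace ℝ (Fin d → ℝ)).direction
          = d - ∑ m, (d - Module.finrank ℝ
              (affineSpan ℝ (p '' ↑(A m)) : AffineSubspace ℝ (Fin d → ℝ)).direction))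

open Finset Module

section AffineIndependence

variable {k V P ι : Type*} [DivisionRing k] [AddCommGroup V] [Module k V] [AddTorsor V P]

theorem affineIndependent_of_forall_notMem_affineSpan {p : ι → P}
    (h : ∀ i, p i ∉ affineSpan k (p '' {x | x ≠ i})) : AffineIndependent k p := by
  classical
  intro s w hw hs i hi
  by_contra hwi
  -- rescale the relation so that `p i` gets weight `-1`; the rest is then an affine combination
  set w' := -(w i)⁻¹ • w with hw'
  have hs' : s.weightedVSub p w' = (0 : V) := by simp [hw', hs]
  have hw'i : w' i = -1 := by simp [hw', hwi]
  have hsum' : ∑ x ∈ s, w' x = 0 := by simp [hw', ← Finset.mul_sum, hw]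
  apply h i
  rw [← s.affineCombination_eq_of_weightedVSub_eq_zero_of_eq_neg_one hs' hi hw'i]
  refine affineCombination_mem_affineSpan_image ?_ (fun x hx hxi => ?_) p
  · rw [Finset.filter_ne', Finset.sum_erase_eq_sub hi, hsum', hw'i]
    norm_num
  · exact absurd (Finset.mem_filter.1 hx).2 hxi

theorem finrank_direction_affineSpan_image_le (p : ι → P) {A : Finset ι} (hA : A.Nonempty) :
    finrank k (affineSpan k (p '' ↑A)).direction ≤ #A - 1 := by
  classical
  rw [direction_affineSpan, ← Finset.coe_image]
  exact finrank_vectorSpan_image_finset_le k p A (Nat.succ_pred_eq_of_pos hA.card_pos).symm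

theorem finrank_direction_affineSpan_image_of_forall_notMem [DecidableEq ι] {p : ι → P}
    {A : Finset ι} (hA : A.Nonempty) (h : ∀ j ∈ A, p j ∉ affineSpan k (p '' ↑(A.erase j))) :
    finrank k (affineSpan k (p '' ↑A)).direction = #A - 1 := by
  have hind : AffineIndependent k (fun i : A => p i) := by
    refine affineIndependent_of_forall_notMem_affineSpan fun j => ?_
    have himage : (fun i : A => p i) '' {x | x ≠ j} = p '' ↑(A.erase j) := by
      ext; aesop
    exact himage ▸ h j j.2
  rw [direction_affineSpan, Set.image_eq_range]
  exact hind.finrank_vectorSpan (by rw [Fintype.card_coe]; have := hA.card_pos; omega)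

end AffineIndependence

namespace StrongGenPos

variable {d n : ℕ} {p : Fin n → Fin d → ℝ}

theorem not_exists_mem_affineSpan (hp : StrongGenPos p) {r : ℕ} {A : Fin r → Finset (Fin n)}
    (hne : ∀ m, (A m).Nonempty) (hdisj : ∀ m m', m ≠ m' → Disjoint (A m) (A m'))
    (hcodim : d + 1 ≤ ∑ m, (d - finrank ℝ (affineSpan ℝ (p '' ↑(A m))).direction)) :
    ¬ ∃ z, ∀ m, z ∈ affineSpan ℝ (p '' ↑(A m)) := by
  have h := hp r A hne hdisj
  rw [if_pos hcodim] at h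
  rintro ⟨z, hz⟩
  exact AffineSubspace.notMem_bot ℝ _ z (h ▸ (AffineSubspace.mem_iInf_iff _ z).2 hz)

theorem existsUnique_mem_affineSpan (hp : StrongGenPos p) {r : ℕ} {A : Fin r → Finset (Fin n)}
    (hne : ∀ m, (A m).Nonempty) (hdisj : ∀ m m', m ≠ m' → Disjoint (A m) (A m'))
    (hcodim : ∑ m, (d - finrank ℝ (affineSpan ℝ (p '' ↑(A m))).direction) = d) :
    ∃! z, ∀ m, z ∈ affineSpan ℝ (p '' ↑(A m)) := by
  have h := hp r A hne hdisj
  rw [if_neg (by omega), hcodim, Nat.sub_self, Submodule.finrank_eq_zero] at h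
  obtain ⟨hbot, hdir⟩ := h
  obtain ⟨z, hz⟩ := (AffineSubspace.nonempty_iff_ne_bot _).2 hbot
  simp only [← AffineSubspace.mem_iInf_iff]
  refine ⟨z, hz, fun y hy => ?_⟩
  have hyz := AffineSubspace.vsub_mem_direction hy hz
  rwa [hdir, Submodule.mem_bot, vsub_eq_zero_iff_eq] at hyz

theorem notMem_affineSpan_erase (hp : StrongGenPos p) {A : Finset (Fin n)} (hA : #A ≤ d + 1)
    {j : Fin n} (hj : j ∈ A) : p j ∉ affineSpan ℝ (p '' ↑(A.erase j)) := by
  rcases (A.erase j).eq_empty_or_nonempty with hempty | hrest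
  · simp [hempty, AffineSubspace.notMem_bot]
  have hrest_le := finrank_direction_affineSpan_image_le (k := ℝ) p hrest
  rw [Finset.card_erase_of_mem hj] at hrest_le
  have hpt : finrank ℝ (affineSpan ℝ (p '' ↑({j} : Finset (Fin n)))).direction = 0 := by
    simp [direction_affineSpan, vectorSpan_singleton]
  refine fun hmem => hp.not_exists_mem_affineSpan (A := ![A.erase j, {j}]) ?_ ?_ ?_
    ⟨p j, Fin.forall_fin_two.2 ⟨hmem, mem_affineSpan ℝ (by simp)⟩⟩
  · exact Fin.forall_fin_two.2 ⟨hrest, Finset.singleton_nonempty j⟩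
  · simp [Fin.forall_fin_two, Finset.disjoint_singleton_left, Finset.disjoint_singleton_right]
  · show d + 1 ≤ (d - finrank ℝ (affineSpan ℝ (p '' ↑(A.erase j))).direction)
      + (d - finrank ℝ (affineSpan ℝ (p '' ↑({j} : Finset (Fin n)))).direction)
    rw [hpt]
    have := hrest.card_pos
    rw [Finset.card_erase_of_mem hj] at this
    omega

theorem finrank_direction_affineSpan (hp : StrongGenPos p) {A : Finset (Fin n)}
    (hA : #A ≤ d + 1) (hne : A.Nonempty) :
    finrank ℝ (affineSpan ℝ (p '' ↑A)).direction = #A - 1 :=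
  finrank_direction_affineSpan_image_of_forall_notMem hne fun _ hj =>
    hp.notMem_affineSpan_erase hA hj

end StrongGenPos

theorem IsPartitionOf.sum_card {n r : ℕ} {A : Fin r → Finset (Fin n)} (hA : IsPartitionOf A) :
    ∑ m, #(A m) = n := by
  classical
  have hcover : Finset.univ.biUnion A = Finset.univ := by
    ext i
    simpa using hA.2 i
  rw [← Finset.card_biUnion fun m _ m' _ hmm' => hA.1 m m' hmm', hcover, Finset.card_univ,
    Fintype.card_fin]

section Deficiency

variable {r K : ℕ} {a : Fin r → ℕ}

theorem sum_tsub_eq_of_sum_eq (ha : ∀ m, a m ≤ K) (hsum : ∑ m, a m = (r - 1) * K + 1) :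
    ∑ m, (K - a m) = K - 1 := by
  have hr : r ≠ 0 := by
    rintro rfl
    simp at hsum
  have hrK : r * K = (r - 1) * K + K := by
    rw [← Nat.succ_mul, Nat.succ_eq_add_one, Nat.sub_add_cancel (Nat.pos_of_ne_zero hr)]
  rw [Finset.sum_tsub_distrib _ fun m _ => ha m, hsum, Finset.sum_const, Finset.card_univ,
    Fintype.card_fin, smul_eq_mul, hrK]
  omega

theorem le_sum_tsub_of_sum_eq (hsum : ∑ m, a m = (r - 1) * K + 1) {M : Fin r} (hM : K < a M) :
    K ≤ ∑ m, (K - a m) := by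
  have hsplit := Finset.sum_erase_add Finset.univ a (Finset.mem_univ M)
  set others := Finset.univ.erase M
  have hothers : (r - 1) * K ≤ ∑ m ∈ others, (K - a m) + ∑ m ∈ others, a m := by
    rw [← Finset.sum_add_distrib]
    calc (r - 1) * K = ∑ m ∈ others, K := by simp [others, Finset.card_erase_of_mem]
      _ ≤ _ := Finset.sum_le_sum fun m _ => le_tsub_add
  have hsub : ∑ m ∈ others, (K - a m) ≤ ∑ m, (K - a m) :=
    Finset.sum_le_sum_of_subset (Finset.erase_subset M _)
  omega

end Deficiency

theorem affine_hulls_of_partition_general (d r : ℕ)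
    (p : Fin ((r - 1) * (d + 1) + 1) → Fin d → ℝ) (hp : StrongGenPos p) :
    (∀ A : Fin r → Finset (Fin ((r - 1) * (d + 1) + 1)), IsPartitionOf A →
      (∀ m, 1 ≤ (A m).card ∧ (A m).card ≤ d + 1) →
      ∃! z : Fin d → ℝ, ∀ m, z ∈ affineSpan ℝ (p '' ↑(A m))) ∧
    (∀ A : Fin r → Finset (Fin ((r - 1) * (d + 1) + 1)), IsPartitionOf A →
      (∀ m, (A m).Nonempty) → (∃ m, d + 1 < (A m).card) →
      ¬ ∃ z : Fin d → ℝ, ∀ m, z ∈ affineSpan ℝ (p '' ↑(A m))) := by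
  refine ⟨fun A hA hcard => ?_, fun A hA hne ⟨M, hM⟩ => ?_⟩
  · have hne : ∀ m, (A m).Nonempty := fun m => Finset.card_pos.1 (hcard m).1
    refine hp.existsUnique_mem_affineSpan hne hA.1 ?_
    calc ∑ m, (d - finrank ℝ (affineSpan ℝ (p '' ↑(A m))).direction)
        = ∑ m, (d + 1 - #(A m)) := Finset.sum_congr rfl fun m _ => by
          rw [hp.finrank_direction_affineSpan (hcard m).2 (hne m)]
          have := (hcard m).1
          omega
      _ = d := sum_tsub_eq_of_sum_eq (fun m => (hcard m).2) hA.sum_card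
  · refine hp.not_exists_mem_affineSpan hne hA.1 ?_
    calc d + 1 ≤ ∑ m, (d + 1 - #(A m)) := le_sum_tsub_of_sum_eq hA.sum_card hM
      _ ≤ ∑ m, (d - finrank ℝ (affineSpan ℝ (p '' ↑(A m))).direction) :=
        Finset.sum_le_sum fun m _ => by
          have := finrank_direction_affineSpan_image_le (k := ℝ) p (hne m)
          have := (hne m).card_pos
          omega

/-- For `n = (r-1)(d+1)+1` points in strong general position in `ℝ^d`:
(i) for every proper partition (all classes of size between `1` and `d+1`) the
affine hulls of the classes intersect in exactly one point;
(ii) for every partition into nonempty classes that is not proper (some class has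
more than `d+1` elements) the affine hulls of the classes have empty
intersection. -/
theorem affine_hulls_of_partition (d r : ℕ) (hd : 1 ≤ d) (hr : 2 ≤ r)
    (p : Fin ((r - 1) * (d + 1) + 1) → Fin d → ℝ) (hp : StrongGenPos p) :
    (∀ A : Fin r → Finset (Fin ((r - 1) * (d + 1) + 1)), IsPartitionOf A →
      (∀ m, 1 ≤ (A m).card ∧ (A m).card ≤ d + 1) →
      ∃! z : Fin d → ℝ, ∀ m, z ∈ affineSpan ℝ (p '' ↑(A m))) ∧
    (∀ A : Fin r → Finset (Fin ((r - 1) * (d + 1) + 1)), IsPartitionOf A →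
      (∀ m, (A m).Nonempty) → (∃ m, d + 1 < (A m).card) →
      ¬ ∃ z : Fin d → ℝ, ∀ m, z ∈ affineSpan ℝ (p '' ↑(A m))) :=
  affine_hulls_of_partition_general d r p hp
end
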